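/- arXiv:2401.04418 — 8 statements merged into one kernel-verified Lean document; each statement's English description precedes it below -/
import Mathlib

section
/- Let X be a nonnegative absolutely continuous random variable with density f, and let a > 0, b ≥ 0. The random variable Y = aX + b has density g(y) = (1/a)·f((y−b)/a) for y ≥ b. Then for every α > 0 with α ≠ 1 and every β > 0, R^α_β(Y) = a^{(1−α)(β−1)} · R^α_β(X); equivalently, (1/(1−α))·(∫_b^∞ ((1/a)f((y−b)/a))^α dy)^{β−1} = a^{(1−α)(β−1)} · (1/(1−α))·(∫_0^∞ f(x)^α dx)^{β−1}. -/
/-!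
The substitution `x = (y - b) / a`, `dy = a dx`, turns `∫ g^α` into `a^(1-α) ∫ f^α`;
raising this to the power `β - 1` produces the factor `a^((1-α)(β-1))`.
-/

open MeasureTheory Set

theorem integral_Ioi_comp_sub_div {E : Type*} [NormedAddCommGroup E] [NormedSpace ℝ E]
    (g : ℝ → E) (b : ℝ) {a : ℝ} (ha : 0 < a) :
    ∫ y in Ioi b, g ((y - b) / a) = a • ∫ x in Ioi 0, g x :=
  calc ∫ y in Ioi b, g ((y - b) / a) = ∫ x in Ioi 0, g (x / a) := by
        simpa using (measurePreserving_sub_right volume b).setIntegral_preimage_emb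
          (measurableEmbedding_subRight b) (fun x => g (x / a)) (Ioi 0)
    _ = a • ∫ x in Ioi 0, g x := by
        simpa [div_eq_mul_inv] using integral_comp_mul_right_Ioi g 0 (inv_pos.2 ha)

theorem integral_const_mul_rpow {X : Type*} [MeasurableSpace X] (μ : Measure X) {g : X → ℝ}
    (hg : ∀ x, 0 ≤ g x) {c : ℝ} (hc : 0 ≤ c) (α : ℝ) :
    ∫ x, (c * g x) ^ α ∂μ = c ^ α * ∫ x, g x ^ α ∂μ := by
  simp_rw [Real.mul_rpow hc (hg _), integral_const_mul]

theorem integral_rpow_affine_density {f : ℝ → ℝ} (hf : ∀ x, 0 ≤ f x) {a : ℝ} (ha : 0 < a)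
    (b α : ℝ) :
    ∫ y in Ioi b, ((1 / a) * f ((y - b) / a)) ^ α = a ^ (1 - α) * ∫ x in Ioi 0, f x ^ α := by
  rw [integral_const_mul_rpow _ (fun y => hf _) (by positivity),
    integral_Ioi_comp_sub_div (fun x => f x ^ α) b ha, smul_eq_mul, ← mul_assoc,
    Real.rpow_sub ha, Real.rpow_one, one_div, Real.inv_rpow ha.le]
  field_simp

theorem rigf_affine_general (f : ℝ → ℝ) (a b α β : ℝ)
    (ha : 0 < a)
    (hf_nonneg : ∀ x, 0 ≤ f x)
    (hf_pos : 0 < ∫ x in Ioi (0:ℝ), f x ^ α) :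
    (1/(1-α)) * (∫ y in Ioi b, ((1/a) * f ((y - b)/a)) ^ α) ^ (β-1)
      = a ^ ((1-α)*(β-1)) * ((1/(1-α)) * (∫ x in Ioi (0:ℝ), f x ^ α) ^ (β-1)) := by
  rw [integral_rpow_affine_density hf_nonneg ha, Real.mul_rpow (by positivity) hf_pos.le,
    ← Real.rpow_mul ha.le]
  ring

/-- RIGF of `Y = aX + b` equals `a^((1-α)(β-1))` times the RIGF of `X`. -/
theorem rigf_affine (f : ℝ → ℝ) (a b α β : ℝ)
    (ha : 0 < a) (hb : 0 ≤ b)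
    (hα : 0 < α) (hα1 : α ≠ 1) (hβ : 0 < β)
    (hf_nonneg : ∀ x, 0 ≤ f x)
    (hf_pdf : ∫ x in Ioi (0:ℝ), f x = 1)
    (hf_int : IntegrableOn (fun x => f x ^ α) (Ioi (0:ℝ)))
    (hf_pos : 0 < ∫ x in Ioi (0:ℝ), f x ^ α) :
    (1/(1-α)) * (∫ y in Ioi b, ((1/a) * f ((y - b)/a)) ^ α) ^ (β-1)
      = a ^ ((1-α)*(β-1)) * ((1/(1-α)) * (∫ x in Ioi (0:ℝ), f x ^ α) ^ (β-1)) :=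
  rigf_affine_general f a b α β ha hf_nonneg hf_pos
end

section
/- Let X be a nonnegative absolutely continuous random variable with density f, let α > 0, α ≠ 1, and set I = ∫_0^∞ f(x)^α dx, assumed to satisfy 0 < I < ∞. Then for every natural number p ≥ 1 and every β > 0, the p-th derivative with respect to β of the map β ↦ R^α_β(X) equals (1/(1−α))·I^{β−1}·(log I)^p. In particular, the first derivative at β = 1 equals the Rényi entropy H_α(X) = (1/(1−α))·log I. -/
open MeasureTheory Set Real

theorem Real.iteratedDeriv_const_rpow {a : ℝ} (ha : 0 < a) (n : ℕ) :
    iteratedDeriv n (fun x : ℝ => a ^ x) = fun x => a ^ x * log a ^ n := by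
  simp only [rpow_def_of_pos ha, iteratedDeriv_exp_const_mul]
  ext x
  ring

theorem Real.iteratedDeriv_const_mul_rpow_sub {a : ℝ} (ha : 0 < a) (c s : ℝ) (n : ℕ) (x : ℝ) :
    iteratedDeriv n (fun b : ℝ => c * a ^ (b - s)) x = c * a ^ (x - s) * log a ^ n := by
  rw [iteratedDeriv_const_mul_field, iteratedDeriv_comp_sub_const (f := fun b => a ^ b),
    iteratedDeriv_const_rpow ha, mul_assoc]

theorem rigf_deriv_general (α : ℝ)
    (I : ℝ)
    (hIpos : 0 < I) :
    (∀ p : ℕ, 1 ≤ p → ∀ β : ℝ, 0 < β →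
      iteratedDeriv p (fun b : ℝ => (1/(1-α)) * I ^ (b-1)) β
        = (1/(1-α)) * I ^ (β-1) * (Real.log I) ^ p)
    ∧ deriv (fun b : ℝ => (1/(1-α)) * I ^ (b-1)) 1 = (1/(1-α)) * Real.log I := by
  refine ⟨fun p _ β _ => iteratedDeriv_const_mul_rpow_sub hIpos _ 1 p β, ?_⟩
  rw [← iteratedDeriv_one, iteratedDeriv_const_mul_rpow_sub hIpos]
  simp

/-- the `p`-th derivative in `β` of the RIGF `β ↦ (1/(1-α)) I^(β-1)` is
`(1/(1-α)) I^(β-1) (log I)^p`; in particular the first derivative at `β = 1` is the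
Rényi entropy `(1/(1-α)) log I`. -/
theorem rigf_deriv (f : ℝ → ℝ) (α : ℝ)
    (hα : 0 < α) (hα1 : α ≠ 1)
    (hf_nonneg : ∀ x, 0 ≤ f x)
    (hf_pdf : ∫ x in Ioi (0:ℝ), f x = 1)
    (I : ℝ) (hI : I = ∫ x in Ioi (0:ℝ), f x ^ α)
    (hf_int : IntegrableOn (fun x => f x ^ α) (Ioi (0:ℝ)))
    (hIpos : 0 < I) :
    (∀ p : ℕ, 1 ≤ p → ∀ β : ℝ, 0 < β →
      iteratedDeriv p (fun b : ℝ => (1/(1-α)) * I ^ (b-1)) β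
        = (1/(1-α)) * I ^ (β-1) * (Real.log I) ^ p)
    ∧ deriv (fun b : ℝ => (1/(1-α)) * I ^ (b-1)) 1 = (1/(1-α)) * Real.log I :=
  rigf_deriv_general α I hIpos
end

section
/- Let X be a nonnegative absolutely continuous random variable with density f, let α > 0 with α ≠ 1 and β > 0, and assume that ∫_0^∞ f(x)·e^{|1−α|·|log f(x)|} dx < ∞ (the integrand taken as 0 where f(x) = 0). Then the series ∑_{q=0}^∞ ((1−α)^q / q!)·ξ_q(X) converges with sum equal to ∫_0^∞ f(x)^α dx, where ξ_q(X) = ∫_0^∞ f(x)(−log f(x))^q dx is the Shannon entropy of order q; consequently R^α_β(X) = (1/(1−α))·(∑_{q=0}^∞ ((1−α)^q / q!)·ξ_q(X))^{β−1}. -/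
/-!
Since `f ^ α = f * exp ((1 - α) * (-log f))`, expanding the exponential gives pointwise
`f ^ α = ∑ q, (1 - α) ^ q / q! * f * (-log f) ^ q`. The series of absolute values sums to
`f * exp (|1 - α| * |log f|)`, which is integrable by hypothesis, so dominated convergence
allows integrating the series term by term.
-/

open MeasureTheory Set Real
open scoped Nat

namespace Real

theorem hasSum_pow_div_factorial_mul_mul_pow (s t u : ℝ) :
    HasSum (fun q : ℕ => s ^ q / q ! * (t * u ^ q)) (t * exp (s * u)) := by
  rw [exp_eq_exp_ℝ]
  refine ((NormedSpace.expSeries_div_hasSum_exp (s * u)).mul_left t).congr_fun fun q => ?_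
  rw [mul_pow]
  ring

theorem hasSum_abs_pow_div_factorial_mul_mul_pow (s t u : ℝ) :
    HasSum (fun q : ℕ => |s ^ q / q ! * (t * u ^ q)|) (|t| * exp (|s| * |u|)) :=
  (hasSum_pow_div_factorial_mul_mul_pow |s| |t| |u|).congr_fun fun q => by
    simp only [abs_mul, abs_div, abs_pow, Nat.abs_cast]

theorem mul_exp_mul_neg_log {t : ℝ} (ht : 0 ≤ t) {α : ℝ} (hα : α ≠ 0) :
    t * exp ((1 - α) * -log t) = t ^ α := by
  rcases ht.eq_or_lt with rfl | ht
  · rw [zero_mul, zero_rpow hα]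
  · rw [rpow_def_of_pos ht, ← exp_log ht, log_exp, ← exp_add]
    ring_nf

end Real

theorem hasSum_integral_mul_neg_log_pow {X : Type*} [MeasurableSpace X] {μ : Measure X}
    {f : X → ℝ} {α : ℝ} (hα : α ≠ 0) (hf_nonneg : ∀ x, 0 ≤ f x) (hf : AEMeasurable f μ)
    (hexp : Integrable (fun x => f x * exp (|1 - α| * |log (f x)|)) μ) :
    HasSum (fun q : ℕ => (1 - α) ^ q / q ! * ∫ x, f x * (-log (f x)) ^ q ∂μ)
      (∫ x, f x ^ α ∂μ) := by
  set F : ℕ → X → ℝ := fun q x => (1 - α) ^ q / q ! * (f x * (-log (f x)) ^ q)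
  have hF_abs : ∀ x, HasSum (fun q => |F q x|) (f x * exp (|1 - α| * |log (f x)|)) := fun x => by
    simpa only [abs_of_nonneg (hf_nonneg x), abs_neg] using
      hasSum_abs_pow_div_factorial_mul_mul_pow (1 - α) (f x) (-log (f x))
  have hF_meas : ∀ q, AEStronglyMeasurable (F q) μ := fun q =>
    (aemeasurable_const.mul (hf.mul ((measurable_log.comp_aemeasurable hf).neg.pow_const q)))
      |>.aestronglyMeasurable
  have hF_sum : ∀ x, HasSum (fun q => F q x) (f x ^ α) := fun x => by
    simpa only [mul_exp_mul_neg_log (hf_nonneg x) hα] using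
      hasSum_pow_div_factorial_mul_mul_pow (1 - α) (f x) (-log (f x))
  have h := hasSum_integral_of_dominated_convergence (fun q x => |F q x|) hF_meas
    (fun q => ae_of_all _ fun x => le_rfl) (ae_of_all _ fun x => (hF_abs x).summable)
    (hexp.congr (ae_of_all _ fun x => (hF_abs x).tsum_eq.symm)) (ae_of_all _ hF_sum)
  simpa only [F, integral_const_mul] using h

theorem rigf_shannon_series_general (f : ℝ → ℝ) (α β : ℝ)
    (hα : 0 < α)
    (hf_nonneg : ∀ x, 0 ≤ f x)
    (hf_pdf : ∫ x in Ioi (0:ℝ), f x = 1)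
    (hexp : IntegrableOn
      (fun x => if f x = 0 then 0 else f x * Real.exp (|1-α| * |Real.log (f x)|))
      (Ioi (0:ℝ))) :
    HasSum (fun q : ℕ => ((1-α)^q / (Nat.factorial q : ℝ)) *
        ∫ x in Ioi (0:ℝ), f x * (-Real.log (f x))^q)
      (∫ x in Ioi (0:ℝ), f x ^ α)
    ∧ (1/(1-α)) * (∫ x in Ioi (0:ℝ), f x ^ α) ^ (β-1)
        = (1/(1-α)) * (∑' q : ℕ, ((1-α)^q / (Nat.factorial q : ℝ)) *
            ∫ x in Ioi (0:ℝ), f x * (-Real.log (f x))^q) ^ (β-1) := by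
  have hf_int : IntegrableOn f (Ioi 0) :=
    Integrable.of_integral_ne_zero (by rw [hf_pdf]; exact one_ne_zero)
  have hexp' : IntegrableOn (fun x => f x * exp (|1 - α| * |log (f x)|)) (Ioi 0) :=
    hexp.congr_fun (fun x _ => by by_cases h : f x = 0 <;> simp [h]) measurableSet_Ioi
  have hsum := hasSum_integral_mul_neg_log_pow hα.ne' hf_nonneg hf_int.aemeasurable hexp'
  exact ⟨hsum, by rw [hsum.tsum_eq]⟩

/-- under an exponential integrability condition, the series
`∑ q, ((1-α)^q / q!) ξ_q(X)` converges to `∫ f^α`, and consequently the RIGF equals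
`(1/(1-α)) (∑ q, ((1-α)^q / q!) ξ_q(X))^(β-1)`. -/
theorem rigf_shannon_series (f : ℝ → ℝ) (α β : ℝ)
    (hα : 0 < α) (hα1 : α ≠ 1) (hβ : 0 < β)
    (hf_nonneg : ∀ x, 0 ≤ f x)
    (hf_pdf : ∫ x in Ioi (0:ℝ), f x = 1)
    (hexp : IntegrableOn
      (fun x => if f x = 0 then 0 else f x * Real.exp (|1-α| * |Real.log (f x)|))
      (Ioi (0:ℝ))) :
    HasSum (fun q : ℕ => ((1-α)^q / (Nat.factorial q : ℝ)) *
        ∫ x in Ioi (0:ℝ), f x * (-Real.log (f x))^q)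
      (∫ x in Ioi (0:ℝ), f x ^ α)
    ∧ (1/(1-α)) * (∫ x in Ioi (0:ℝ), f x ^ α) ^ (β-1)
        = (1/(1-α)) * (∑' q : ℕ, ((1-α)^q / (Nat.factorial q : ℝ)) *
            ∫ x in Ioi (0:ℝ), f x * (-Real.log (f x))^q) ^ (β-1) :=
  rigf_shannon_series_general f α β hα hf_nonneg hf_pdf hexp
end

section
/- Let X be a nonnegative absolutely continuous random variable with density f, let 0 < α < 1, and let β > 0 satisfy either 0 < β < 1 or β ≥ 2. Assume 0 < ∫_0^∞ f(x)^α dx < ∞ and ∫_0^∞ f(x)^{αβ−α−β+2} dx < ∞. Then R^α_β(X) ≤ (1/(1−α))·G_{αβ−α−β+2}(X), i.e. (1/(1−α))·(∫_0^∞ f(x)^α dx)^{β−1} ≤ (1/(1−α))·∫_0^∞ f(x)^{αβ−α−β+2} dx. -/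
/-!
With `γ = αβ - α - β + 2`, the three exponents `α`, `1`, `γ` are collinear: for `β < 1` the
exponent `1` is a convex combination of `α` and `γ` with weights `(1-β)/(2-β)` and `1/(2-β)`,
and for `β ≥ 2` the exponent `α` is a convex combination of `γ` and `1` with weights `1/(β-1)` and
`(β-2)/(β-1)`. Hölder's inequality (log-convexity of `p ↦ ∫ f^p`) together with `∫ f = 1` then
gives `(∫ f^α)^(β-1) ≤ ∫ f^γ` in both cases, and multiplying by `1/(1-α) > 0` preserves it.
-/

open MeasureTheory Set

section

variable {X : Type*} [MeasurableSpace X] {μ : Measure X}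

theorem integral_rpow_mul_rpow_le {g h : X → ℝ} (hg0 : 0 ≤ᵐ[μ] g) (hh0 : 0 ≤ᵐ[μ] h)
    (hg : Integrable g μ) (hh : Integrable h μ) {p q : ℝ} (hp : 0 ≤ p) (hq : 0 ≤ q)
    (hpq : p + q = 1) :
    ∫ x, g x ^ p * h x ^ q ∂μ ≤ (∫ x, g x ∂μ) ^ p * (∫ x, h x ∂μ) ^ q := by
  have hG := integral_nonneg_of_ae hg0
  have hH := integral_nonneg_of_ae hh0
  rw [← ENNReal.ofReal_le_ofReal_iff (by positivity)]
  calc ENNReal.ofReal (∫ x, g x ^ p * h x ^ q ∂μ)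
      ≤ ∫⁻ x, ENNReal.ofReal (g x ^ p * h x ^ q) ∂μ := by
        have hmeas : AEStronglyMeasurable (fun x ↦ g x ^ p * h x ^ q) μ :=
          ((hg.aemeasurable.pow_const p).mul (hh.aemeasurable.pow_const q)).aestronglyMeasurable
        have hnonneg : 0 ≤ᵐ[μ] fun x ↦ g x ^ p * h x ^ q := by
          filter_upwards [hg0, hh0] with x hgx hhx
          exact mul_nonneg (Real.rpow_nonneg hgx p) (Real.rpow_nonneg hhx q)
        rw [integral_eq_lintegral_of_nonneg_ae hnonneg hmeas]
        exact ENNReal.ofReal_toReal_le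
    _ = ∫⁻ x, ENNReal.ofReal (g x) ^ p * ENNReal.ofReal (h x) ^ q ∂μ := by
        refine lintegral_congr_ae ?_
        filter_upwards [hg0, hh0] with x hgx hhx
        rw [ENNReal.ofReal_mul (Real.rpow_nonneg hgx p), ENNReal.ofReal_rpow_of_nonneg hgx hp,
          ENNReal.ofReal_rpow_of_nonneg hhx hq]
    _ ≤ (∫⁻ x, ENNReal.ofReal (g x) ∂μ) ^ p * (∫⁻ x, ENNReal.ofReal (h x) ∂μ) ^ q :=
        ENNReal.lintegral_mul_norm_pow_le hg.aemeasurable.ennreal_ofReal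
          hh.aemeasurable.ennreal_ofReal hp hq hpq
    _ = ENNReal.ofReal ((∫ x, g x ∂μ) ^ p * (∫ x, h x ∂μ) ^ q) := by
        rw [← ofReal_integral_eq_lintegral_ofReal hg hg0,
          ← ofReal_integral_eq_lintegral_ofReal hh hh0, ENNReal.ofReal_mul (by positivity),
          ENNReal.ofReal_rpow_of_nonneg hG hp, ENNReal.ofReal_rpow_of_nonneg hH hq]

variable {f : X → ℝ}

theorem integral_rpow_convex_comb_le (hf0 : 0 ≤ᵐ[μ] f) {a b t : ℝ} (ht0 : 0 ≤ t) (ht1 : t ≤ 1)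
    (hab : t * a + (1 - t) * b ≠ 0) (ha : Integrable (fun x ↦ f x ^ a) μ)
    (hb : Integrable (fun x ↦ f x ^ b) μ) :
    ∫ x, f x ^ (t * a + (1 - t) * b) ∂μ
      ≤ (∫ x, f x ^ a ∂μ) ^ t * (∫ x, f x ^ b ∂μ) ^ (1 - t) := by
  have hsplit : ∀ᵐ x ∂μ, f x ^ (t * a + (1 - t) * b) = (f x ^ a) ^ t * (f x ^ b) ^ (1 - t) := by
    filter_upwards [hf0] with x hx
    -- `hab` rules out `f x = 0` with exponent `0`, where `0 ^ 0 = 1` breaks the splitting.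
    rw [← Real.rpow_mul hx, ← Real.rpow_mul hx,
      ← Real.rpow_add' hx (by rwa [mul_comm a, mul_comm b])]
    ring_nf
  rw [integral_congr_ae hsplit]
  exact integral_rpow_mul_rpow_le (hf0.mono fun x hx ↦ Real.rpow_nonneg hx a)
    (hf0.mono fun x hx ↦ Real.rpow_nonneg hx b) ha hb ht0 (by linarith) (by ring)

theorem rpow_integral_rpow_le_integral_rpow_of_lt_one (hf0 : 0 ≤ᵐ[μ] f)
    (hf1 : ∫ x, f x ∂μ = 1) {α β : ℝ} (hβ : β < 1) (hα : Integrable (fun x ↦ f x ^ α) μ)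
    (hα_pos : 0 < ∫ x, f x ^ α ∂μ)
    (hγ : Integrable (fun x ↦ f x ^ (α * β - α - β + 2)) μ) :
    (∫ x, f x ^ α ∂μ) ^ (β - 1) ≤ ∫ x, f x ^ (α * β - α - β + 2) ∂μ := by
  set I := ∫ x, f x ^ α ∂μ
  set J := ∫ x, f x ^ (α * β - α - β + 2) ∂μ
  have h2β : 0 < 2 - β := by linarith
  set t := (1 - β) / (2 - β) with ht
  have ht0 : 0 ≤ t := div_nonneg (by linarith) h2β.le
  have ht1 : t ≤ 1 := (div_le_one h2β).2 (by linarith)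
  have hcomb : t * α + (1 - t) * (α * β - α - β + 2) = 1 := by
    rw [ht]
    field_simp
    ring
  have hJ : 0 ≤ J := integral_nonneg_of_ae (hf0.mono fun x hx ↦ Real.rpow_nonneg hx _)
  have hholder : 1 ≤ I ^ t * J ^ (1 - t) := by
    have := integral_rpow_convex_comb_le hf0 ht0 ht1 (by rw [hcomb]; norm_num) hα hγ
    rw [hcomb] at this
    simpa [hf1] using this
  have hone : 1 ≤ I ^ (1 - β) * J := by
    calc (1 : ℝ) ≤ (I ^ t * J ^ (1 - t)) ^ (2 - β) := Real.one_le_rpow hholder h2β.le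
      _ = I ^ (1 - β) * J := by
        rw [Real.mul_rpow (by positivity) (by positivity), ← Real.rpow_mul hα_pos.le,
          ← Real.rpow_mul hJ]
        congr 2
        · rw [ht]
          field_simp
        · rw [show (1 - t) * (2 - β) = 1 by rw [ht]; field_simp; ring, Real.rpow_one]
  rw [show β - 1 = -(1 - β) by ring, Real.rpow_neg hα_pos.le]
  exact (inv_le_iff_one_le_mul₀' (by positivity)).2 hone

theorem rpow_integral_rpow_le_integral_rpow_of_two_le (hf0 : 0 ≤ᵐ[μ] f)
    (hf1 : ∫ x, f x ∂μ = 1) {α β : ℝ} (hα : α ≠ 0) (hβ : 2 ≤ β)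
    (hγ : Integrable (fun x ↦ f x ^ (α * β - α - β + 2)) μ) :
    (∫ x, f x ^ α ∂μ) ^ (β - 1) ≤ ∫ x, f x ^ (α * β - α - β + 2) ∂μ := by
  set I := ∫ x, f x ^ α ∂μ
  set J := ∫ x, f x ^ (α * β - α - β + 2) ∂μ
  have hβ1 : 0 < β - 1 := by linarith
  set t := 1 / (β - 1) with ht
  have ht0 : 0 ≤ t := by positivity
  have ht1 : t ≤ 1 := (div_le_one hβ1).2 (by linarith)
  have hcomb : t * (α * β - α - β + 2) + (1 - t) * 1 = α := by
    rw [ht]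
    field_simp
    ring
  have hf : Integrable (fun x ↦ f x ^ (1 : ℝ)) μ := by
    simpa using Integrable.of_integral_ne_zero (hf1 ▸ one_ne_zero)
  have hholder : I ≤ J ^ t := by
    have := integral_rpow_convex_comb_le hf0 ht0 ht1 (by rwa [hcomb]) hγ hf
    rw [hcomb] at this
    simpa [hf1] using this
  have hI : 0 ≤ I := integral_nonneg_of_ae (hf0.mono fun x hx ↦ Real.rpow_nonneg hx _)
  have hJ : 0 ≤ J := integral_nonneg_of_ae (hf0.mono fun x hx ↦ Real.rpow_nonneg hx _)
  calc I ^ (β - 1) ≤ (J ^ t) ^ (β - 1) := Real.rpow_le_rpow hI hholder hβ1.le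
    _ = J := by rw [← Real.rpow_mul hJ, one_div_mul_cancel hβ1.ne', Real.rpow_one]

end

/-- for `0 < α < 1` and `0 < β < 1` or `β ≥ 2`,
`R^α_β(X) ≤ (1/(1-α)) G_{αβ-α-β+2}(X)`. -/
theorem rigf_le_igf_of_alpha_lt_one (f : ℝ → ℝ) (α β : ℝ)
    (hα0 : 0 < α) (hα1 : α < 1)
    (hβ : (0 < β ∧ β < 1) ∨ 2 ≤ β)
    (hf_nonneg : ∀ x, 0 ≤ f x)
    (hf_pdf : ∫ x in Ioi (0:ℝ), f x = 1)
    (hint1 : IntegrableOn (fun x => f x ^ α) (Ioi (0:ℝ)))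
    (hpos1 : 0 < ∫ x in Ioi (0:ℝ), f x ^ α)
    (hint2 : IntegrableOn (fun x => f x ^ (α*β - α - β + 2)) (Ioi (0:ℝ))) :
    (1/(1-α)) * (∫ x in Ioi (0:ℝ), f x ^ α) ^ (β-1)
      ≤ (1/(1-α)) * ∫ x in Ioi (0:ℝ), f x ^ (α*β - α - β + 2) := by
  refine mul_le_mul_of_nonneg_left ?_ (one_div_nonneg.2 (sub_nonneg.2 hα1.le))
  have hf0 : 0 ≤ᵐ[volume.restrict (Ioi (0:ℝ))] f := Filter.Eventually.of_forall hf_nonneg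
  rcases hβ with ⟨-, hβ1⟩ | hβ2
  · exact rpow_integral_rpow_le_integral_rpow_of_lt_one hf0 hf_pdf hβ1 hint1 hpos1 hint2
  · exact rpow_integral_rpow_le_integral_rpow_of_two_le hf0 hf_pdf hα0.ne' hβ2 hint2
end

section
/- Let X be a nonnegative absolutely continuous random variable with density f and let 0 < α < 1, with 0 < ∫_0^∞ f(x)^α dx < ∞ and 0 < ∫_0^∞ f(x)^{(α+1)/2} dx < ∞. Then: (i) if β ≥ 1, R^α_β(X) ≥ (1/2)·R^{(α+1)/2}_{2β−1}(X); (ii) if 0 < β < 1, R^α_β(X) ≤ (1/2)·R^{(α+1)/2}_{2β−1}(X). Explicitly, (1/(1−α))·(∫_0^∞ f^α)^{β−1} ≥ (respectively ≤) (1/(1−α))·(∫_0^∞ f^{(α+1)/2})^{2(β−1)}. -/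
open MeasureTheory Set

/-! Cauchy–Schwarz applied to `f ^ (α / 2)` and `f ^ (1 / 2)` gives
`(∫ f ^ ((α + 1) / 2)) ^ 2 ≤ (∫ f ^ α) * ∫ f = ∫ f ^ α`; raising both sides to the power `β - 1`
preserves or reverses this according to the sign of `β - 1`. -/

section CauchySchwarz

variable {Ω : Type*} [MeasurableSpace Ω] {μ : Measure Ω}

theorem sq_integral_mul_le_integral_sq_mul_integral_sq {g h : Ω → ℝ}
    (hg_nonneg : 0 ≤ᵐ[μ] g) (hh_nonneg : 0 ≤ᵐ[μ] h) (hg : MemLp g 2 μ) (hh : MemLp h 2 μ) :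
    (∫ x, g x * h x ∂μ) ^ 2 ≤ (∫ x, g x ^ 2 ∂μ) * ∫ x, h x ^ 2 ∂μ := by
  have two : ENNReal.ofReal 2 = 2 := ENNReal.ofReal_ofNat 2
  have holder := integral_mul_le_Lp_mul_Lq_of_nonneg Real.HolderConjugate.two_two
    hg_nonneg hh_nonneg (two ▸ hg) (two ▸ hh)
  simp only [Real.rpow_two, ← Real.sqrt_eq_rpow] at holder
  have hgh_nonneg : 0 ≤ ∫ x, g x * h x ∂μ :=
    integral_nonneg_of_ae (by filter_upwards [hg_nonneg, hh_nonneg] with x hgx hhx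
                                using mul_nonneg hgx hhx)
  calc (∫ x, g x * h x ∂μ) ^ 2
      ≤ (√(∫ x, g x ^ 2 ∂μ) * √(∫ x, h x ^ 2 ∂μ)) ^ 2 := pow_le_pow_left₀ hgh_nonneg holder 2
    _ = (∫ x, g x ^ 2 ∂μ) * ∫ x, h x ^ 2 ∂μ := by
      rw [mul_pow, Real.sq_sqrt (integral_nonneg fun x => sq_nonneg _),
        Real.sq_sqrt (integral_nonneg fun x => sq_nonneg _)]

theorem Real.rpow_div_two_sq {x : ℝ} (hx : 0 ≤ x) (a : ℝ) : (x ^ (a / 2)) ^ 2 = x ^ a := by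
  rw [← Real.rpow_natCast, ← Real.rpow_mul hx]
  norm_num

theorem memLp_two_rpow_div_two {f : Ω → ℝ} {a : ℝ} (hf_nonneg : 0 ≤ᵐ[μ] f)
    (hfa : Integrable (fun x => f x ^ a) μ) : MemLp (fun x => f x ^ (a / 2)) 2 μ := by
  have hmeas : AEStronglyMeasurable (fun x => f x ^ (a / 2)) μ := by
    refine (hfa.aestronglyMeasurable.aemeasurable.pow_const (1 / 2 : ℝ)).aestronglyMeasurable.congr ?_
    filter_upwards [hf_nonneg] with x hx
    rw [← Real.rpow_mul hx, mul_one_div]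
  rw [memLp_two_iff_integrable_sq hmeas]
  refine hfa.congr ?_
  filter_upwards [hf_nonneg] with x hx
  rw [Real.rpow_div_two_sq hx]

theorem sq_integral_rpow_add_div_two_le {f : Ω → ℝ} {a b : ℝ} (hab : a + b ≠ 0)
    (hf_nonneg : 0 ≤ᵐ[μ] f) (hfa : Integrable (fun x => f x ^ a) μ)
    (hfb : Integrable (fun x => f x ^ b) μ) :
    (∫ x, f x ^ ((a + b) / 2) ∂μ) ^ 2 ≤ (∫ x, f x ^ a ∂μ) * ∫ x, f x ^ b ∂μ := by
  have hsplit : (fun x => f x ^ ((a + b) / 2)) =ᵐ[μ] fun x => f x ^ (a / 2) * f x ^ (b / 2) := by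
    filter_upwards [hf_nonneg] with x hx
    rw [← Real.rpow_add' hx (by rwa [← add_div, div_ne_zero_iff, and_iff_left two_ne_zero]),
      add_div]
  have hsq (c : ℝ) : (fun x => (f x ^ (c / 2)) ^ 2) =ᵐ[μ] fun x => f x ^ c := by
    filter_upwards [hf_nonneg] with x hx using Real.rpow_div_two_sq hx c
  have hrpow_nonneg (c : ℝ) : 0 ≤ᵐ[μ] fun x => f x ^ c := by
    filter_upwards [hf_nonneg] with x hx using Real.rpow_nonneg hx c
  rw [integral_congr_ae hsplit, ← integral_congr_ae (hsq a), ← integral_congr_ae (hsq b)]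
  exact sq_integral_mul_le_integral_sq_mul_integral_sq (hrpow_nonneg _) (hrpow_nonneg _)
    (memLp_two_rpow_div_two hf_nonneg hfa) (memLp_two_rpow_div_two hf_nonneg hfb)

end CauchySchwarz

theorem Real.rpow_two_mul_le_rpow_of_sq_le {x y e : ℝ} (hx : 0 ≤ x) (hxy : x ^ 2 ≤ y)
    (he : 0 ≤ e) : x ^ (2 * e) ≤ y ^ e := by
  rw [Real.rpow_mul hx, Real.rpow_two]
  exact Real.rpow_le_rpow (sq_nonneg x) hxy he

theorem Real.rpow_le_rpow_two_mul_of_sq_le {x y e : ℝ} (hx : 0 < x) (hxy : x ^ 2 ≤ y)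
    (he : e ≤ 0) : y ^ e ≤ x ^ (2 * e) := by
  rw [Real.rpow_mul hx.le, Real.rpow_two]
  exact Real.rpow_le_rpow_of_nonpos (pow_pos hx 2) hxy he

theorem rigf_cauchy_schwarz_bound_alpha_lt_one_general (f : ℝ → ℝ) (α β : ℝ)
    (hα0 : 0 < α) (hα1 : α < 1)
    (hf_nonneg : ∀ x, 0 ≤ f x)
    (hf_pdf : ∫ x in Ioi (0:ℝ), f x = 1)
    (hint1 : IntegrableOn (fun x => f x ^ α) (Ioi (0:ℝ)))
    (hpos2 : 0 < ∫ x in Ioi (0:ℝ), f x ^ ((α+1)/2)) :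
    (1 ≤ β →
      (1/(1-α)) * (∫ x in Ioi (0:ℝ), f x ^ ((α+1)/2)) ^ (2*(β-1))
        ≤ (1/(1-α)) * (∫ x in Ioi (0:ℝ), f x ^ α) ^ (β-1))
    ∧ (0 < β → β < 1 →
      (1/(1-α)) * (∫ x in Ioi (0:ℝ), f x ^ α) ^ (β-1)
        ≤ (1/(1-α)) * (∫ x in Ioi (0:ℝ), f x ^ ((α+1)/2)) ^ (2*(β-1))) := by
  have hf_int : IntegrableOn f (Ioi (0:ℝ)) := by
    by_contra h
    simp [integral_undef h] at hf_pdf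
  have hCS : (∫ x in Ioi (0:ℝ), f x ^ ((α+1)/2)) ^ 2 ≤ ∫ x in Ioi (0:ℝ), f x ^ α := by
    simpa only [Real.rpow_one, hf_pdf, mul_one] using
      sq_integral_rpow_add_div_two_le (by linarith) (Filter.Eventually.of_forall hf_nonneg) hint1
        (hf_int.congr_fun (fun x _ => (Real.rpow_one (f x)).symm) measurableSet_Ioi)
  have hc : 0 ≤ 1/(1-α) := one_div_nonneg.mpr (by linarith)
  refine ⟨fun hβ => ?_, fun _ hβ1 => ?_⟩
  · exact mul_le_mul_of_nonneg_left
      (Real.rpow_two_mul_le_rpow_of_sq_le hpos2.le hCS (by linarith)) hc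
  · exact mul_le_mul_of_nonneg_left
      (Real.rpow_le_rpow_two_mul_of_sq_le hpos2 hCS (by linarith)) hc

/-- for `0 < α < 1`: if `β ≥ 1` then
`R^α_β(X) ≥ (1/2) R^{(α+1)/2}_{2β-1}(X)`, and if `0 < β < 1` the reverse inequality holds.
Explicitly, `(1/(1-α)) (∫ f^α)^(β-1) ≥ (≤) (1/(1-α)) (∫ f^((α+1)/2))^(2(β-1))`. -/
theorem rigf_cauchy_schwarz_bound_alpha_lt_one (f : ℝ → ℝ) (α β : ℝ)
    (hα0 : 0 < α) (hα1 : α < 1)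
    (hf_nonneg : ∀ x, 0 ≤ f x)
    (hf_pdf : ∫ x in Ioi (0:ℝ), f x = 1)
    (hint1 : IntegrableOn (fun x => f x ^ α) (Ioi (0:ℝ)))
    (hpos1 : 0 < ∫ x in Ioi (0:ℝ), f x ^ α)
    (hint2 : IntegrableOn (fun x => f x ^ ((α+1)/2)) (Ioi (0:ℝ)))
    (hpos2 : 0 < ∫ x in Ioi (0:ℝ), f x ^ ((α+1)/2)) :
    (1 ≤ β →
      (1/(1-α)) * (∫ x in Ioi (0:ℝ), f x ^ ((α+1)/2)) ^ (2*(β-1))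
        ≤ (1/(1-α)) * (∫ x in Ioi (0:ℝ), f x ^ α) ^ (β-1))
    ∧ (0 < β → β < 1 →
      (1/(1-α)) * (∫ x in Ioi (0:ℝ), f x ^ α) ^ (β-1)
        ≤ (1/(1-α)) * (∫ x in Ioi (0:ℝ), f x ^ ((α+1)/2)) ^ (2*(β-1))) :=
  rigf_cauchy_schwarz_bound_alpha_lt_one_general f α β hα0 hα1 hf_nonneg hf_pdf hint1 hpos2
end

section
/- Let X be a nonnegative absolutely continuous random variable with density f, let α > 1 and 1 < β < 2. Assume 0 < ∫_0^∞ f(x)^α dx < ∞ and ∫_0^∞ f(x)^{αβ−α−β+2} dx < ∞. Then R^α_β(X) ≤ (1/(1−α))·G_{αβ−α−β+2}(X), i.e. (1/(1−α))·(∫_0^∞ f(x)^α dx)^{β−1} ≤ (1/(1−α))·∫_0^∞ f(x)^{αβ−α−β+2} dx (note 1/(1−α) < 0 here). -/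
open MeasureTheory Set

/-!
The exponent `αβ - α - β + 2` is the convex combination `α θ + 1 (1 - θ)` with `θ = β - 1 ∈ (0, 1)`.
Since `p ↦ log ∫ f ^ p` is convex (Hölder's inequality), `∫ f ^ (αβ-α-β+2) ≤ (∫ f ^ α) ^ θ (∫ f) ^ (1-θ)`,
and `∫ f = 1`. Multiplying by `1 / (1 - α) < 0` reverses the inequality.
-/

theorem ENNReal.lintegral_rpow_mul_add_mul_le {X : Type*} [MeasurableSpace X] {μ : Measure X}
    {g : X → ENNReal} (hg : AEMeasurable g μ) {p q θ : ℝ} (hp : 0 ≤ p) (hq : 0 ≤ q)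
    (hθ0 : 0 ≤ θ) (hθ1 : θ ≤ 1) :
    ∫⁻ x, g x ^ (p * θ + q * (1 - θ)) ∂μ
      ≤ (∫⁻ x, g x ^ p ∂μ) ^ θ * (∫⁻ x, g x ^ q ∂μ) ^ (1 - θ) := by
  have hsplit : ∀ x, g x ^ (p * θ + q * (1 - θ)) = (g x ^ p) ^ θ * (g x ^ q) ^ (1 - θ) :=
    fun x => by
      rw [ENNReal.rpow_add_of_nonneg _ _ (by positivity) (by nlinarith), ENNReal.rpow_mul,
        ENNReal.rpow_mul]
  simp_rw [hsplit]
  exact ENNReal.lintegral_mul_norm_pow_le (hg.pow_const p) (hg.pow_const q) hθ0 (by linarith)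
    (by ring)

theorem integral_rpow_mul_add_mul_le {X : Type*} [MeasurableSpace X] {μ : Measure X}
    {f : X → ℝ} (hf : 0 ≤ᵐ[μ] f) (hfm : AEMeasurable f μ) {p q θ : ℝ} (hp : 0 ≤ p) (hq : 0 ≤ q)
    (hfp : Integrable (fun x => f x ^ p) μ) (hfq : Integrable (fun x => f x ^ q) μ)
    (hθ0 : 0 ≤ θ) (hθ1 : θ ≤ 1) :
    ∫ x, f x ^ (p * θ + q * (1 - θ)) ∂μ
      ≤ (∫ x, f x ^ p ∂μ) ^ θ * (∫ x, f x ^ q ∂μ) ^ (1 - θ) := by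
  have hofReal_rpow : ∀ r : ℝ, 0 ≤ r →
      ∫⁻ x, ENNReal.ofReal (f x) ^ r ∂μ = ∫⁻ x, ENNReal.ofReal (f x ^ r) ∂μ := fun r hr =>
    lintegral_congr_ae (hf.mono fun x hx => ENNReal.ofReal_rpow_of_nonneg hx hr)
  have hlintegral : ∀ r : ℝ, 0 ≤ r →
      ∫ x, f x ^ r ∂μ = (∫⁻ x, ENNReal.ofReal (f x) ^ r ∂μ).toReal := fun r hr => by
    rw [hofReal_rpow r hr, integral_eq_lintegral_of_nonneg_ae
      (hf.mono fun x hx => Real.rpow_nonneg hx r) (hfm.pow_const r).aestronglyMeasurable]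
  have hfinite : ∀ r : ℝ, 0 ≤ r → Integrable (fun x => f x ^ r) μ →
      ∫⁻ x, ENNReal.ofReal (f x) ^ r ∂μ ≠ ⊤ := fun r hr hfr => by
    rw [hofReal_rpow r hr]
    exact hfr.lintegral_lt_top.ne
  calc ∫ x, f x ^ (p * θ + q * (1 - θ)) ∂μ
      = (∫⁻ x, ENNReal.ofReal (f x) ^ (p * θ + q * (1 - θ)) ∂μ).toReal :=
        hlintegral _ (by nlinarith)
    _ ≤ ((∫⁻ x, ENNReal.ofReal (f x) ^ p ∂μ) ^ θ
          * (∫⁻ x, ENNReal.ofReal (f x) ^ q ∂μ) ^ (1 - θ)).toReal :=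
        ENNReal.toReal_mono (ENNReal.mul_ne_top (ENNReal.rpow_ne_top_of_nonneg hθ0
          (hfinite p hp hfp)) (ENNReal.rpow_ne_top_of_nonneg (by linarith) (hfinite q hq hfq)))
          (ENNReal.lintegral_rpow_mul_add_mul_le hfm.ennreal_ofReal hp hq hθ0 hθ1)
    _ = (∫ x, f x ^ p ∂μ) ^ θ * (∫ x, f x ^ q ∂μ) ^ (1 - θ) := by
        rw [ENNReal.toReal_mul, ← ENNReal.toReal_rpow, ← ENNReal.toReal_rpow, hlintegral p hp,
          hlintegral q hq]

theorem rigf_le_igf_of_one_lt_alpha_general (f : ℝ → ℝ) (α β : ℝ)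
    (hα : 1 < α)
    (hβ1 : 1 < β) (hβ2 : β < 2)
    (hf_nonneg : ∀ x, 0 ≤ f x)
    (hf_pdf : ∫ x in Ioi (0:ℝ), f x = 1)
    (hint1 : IntegrableOn (fun x => f x ^ α) (Ioi (0:ℝ))) :
    (1/(1-α)) * (∫ x in Ioi (0:ℝ), f x ^ α) ^ (β-1)
      ≤ (1/(1-α)) * ∫ x in Ioi (0:ℝ), f x ^ (α*β - α - β + 2) := by
  have hf_int : IntegrableOn f (Ioi (0:ℝ)) :=
    Integrable.of_integral_ne_zero (by rw [hf_pdf]; exact one_ne_zero)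
  have h := integral_rpow_mul_add_mul_le (ae_of_all _ hf_nonneg) hf_int.aemeasurable
    (q := 1) (θ := β - 1) (by linarith) zero_le_one hint1
    (by simp only [Real.rpow_one]; exact hf_int) (by linarith) (by linarith)
  simp only [Real.rpow_one, hf_pdf, Real.one_rpow, one_mul, mul_one] at h
  rw [show α * (β - 1) + (1 - (β - 1)) = α * β - α - β + 2 by ring] at h
  exact mul_le_mul_of_nonpos_left h (div_nonpos_of_nonneg_of_nonpos zero_le_one (by linarith))

/-- for `α > 1` and `1 < β < 2`,
`R^α_β(X) ≤ (1/(1-α)) G_{αβ-α-β+2}(X)`. -/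
theorem rigf_le_igf_of_one_lt_alpha (f : ℝ → ℝ) (α β : ℝ)
    (hα : 1 < α)
    (hβ1 : 1 < β) (hβ2 : β < 2)
    (hf_nonneg : ∀ x, 0 ≤ f x)
    (hf_pdf : ∫ x in Ioi (0:ℝ), f x = 1)
    (hint1 : IntegrableOn (fun x => f x ^ α) (Ioi (0:ℝ)))
    (hpos1 : 0 < ∫ x in Ioi (0:ℝ), f x ^ α)
    (hint2 : IntegrableOn (fun x => f x ^ (α*β - α - β + 2)) (Ioi (0:ℝ))) :
    (1/(1-α)) * (∫ x in Ioi (0:ℝ), f x ^ α) ^ (β-1)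
      ≤ (1/(1-α)) * ∫ x in Ioi (0:ℝ), f x ^ (α*β - α - β + 2) :=
  rigf_le_igf_of_one_lt_alpha_general f α β hα hβ1 hβ2 hf_nonneg hf_pdf hint1
end

section
/- Let T be the lifetime of a coherent system whose components are identically distributed with continuous, strictly increasing CDF F and density f, and with distortion function q : [0,1] → [0,1] (increasing, continuously differentiable, q(0)=0, q(1)=1), so that T has CDF q(F(x)) and density f_T(x) = q′(F(x))·f(x), and R^α_β(T) = (1/(1−α))·(∫_0^1 q′(u)^α f(F⁻¹(u))^{α−1} du)^{β−1}. Write ψ_α(q(u)) = (q′(u) f(F⁻¹(u)))^α and φ_α(u) = f(F⁻¹(u))^α, and assume the integrals defining R^α_β(T) and R^α_β(X) are finite and positive. If ψ_α(q(u)) ≥ φ_α(u) for all u ∈ (0,1), then: (i) R^α_β(T) ≥ R^α_β(X) when {α > 1, 0 < β ≤ 1} or {0 < α < 1, β ≥ 1}; (ii) R^α_β(T) ≤ R^α_β(X) when {α > 1, β ≥ 1} or {0 < α < 1, 0 < β ≤ 1}. -/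
/-!
Since `q` is monotone, `q' ≥ 0`, so `ψ_α(q(u)) ≥ φ_α(u)` says `q'(u)^α ≥ 1` wherever
`f(F⁻¹(u)) > 0`; hence the integrand of `R^α_β(T)` dominates that of `R^α_β(X)` pointwise.
The map `I ↦ I^(β-1) / (1-α)` is monotone on `(0, ∞)` when `(1-α)(β-1) ≥ 0` and antitone
when `(1-α)(β-1) ≤ 0`, which gives the two inequalities.
-/

open MeasureTheory Set Topology

lemma HasDerivAt.nonneg_of_monotoneOn_of_mem_nhds {g : ℝ → ℝ} {g' x : ℝ} {s : Set ℝ}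
    (hd : HasDerivAt g g' x) (hs : s ∈ 𝓝 x) (hg : MonotoneOn g s) : 0 ≤ g' := by
  refine hd.hasDerivWithinAt.nonneg_of_monotoneOn ?_ hg
  rw [accPt_principal_iff_nhdsWithin, sdiff_eq,
    nhdsWithin_inter_of_mem (mem_nhdsWithin_of_mem_nhds hs)]
  infer_instance

lemma Real.rpow_sub_one_le_rpow_mul_rpow_sub_one {a c α : ℝ} (ha : 0 ≤ a) (hc : 0 ≤ c)
    (hα : α ≠ 1) (h : a ^ α ≤ (c * a) ^ α) : a ^ (α - 1) ≤ c ^ α * a ^ (α - 1) := by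
  rcases ha.eq_or_lt with rfl | ha
  · simp [Real.zero_rpow (sub_ne_zero.mpr hα)]
  have hcα : 1 ≤ c ^ α := by
    rw [Real.mul_rpow hc ha.le] at h
    exact (le_mul_iff_one_le_left (Real.rpow_pos_of_pos ha α)).mp h
  exact le_mul_of_one_le_left (Real.rpow_nonneg ha.le _) hcα

/-- The Rényi information generating function `R^α_β`, as a function of `I = ∫ f^α`. -/
noncomputable def rigfOfIntegral (α β I : ℝ) : ℝ := 1 / (1 - α) * I ^ (β - 1)

section rigfOfIntegral

variable {α β : ℝ}

lemma rigfOfIntegral_monotoneOn (h : 0 ≤ (1 - α) * (β - 1)) :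
    MonotoneOn (rigfOfIntegral α β) (Ioi 0) := by
  intro x hx y _ hxy
  rcases lt_trichotomy α 1 with hα | rfl | hα
  · have hβ : 0 ≤ β - 1 := nonneg_of_mul_nonneg_right h (by linarith)
    exact mul_le_mul_of_nonneg_left (Real.rpow_le_rpow (le_of_lt hx) hxy hβ)
      (one_div_nonneg.mpr (by linarith))
  · simp [rigfOfIntegral]
  · have hβ : β - 1 ≤ 0 := nonpos_of_mul_nonneg_right h (by linarith)
    exact mul_le_mul_of_nonpos_left (Real.rpow_le_rpow_of_nonpos hx hxy hβ)
      (one_div_nonpos.mpr (by linarith))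

lemma rigfOfIntegral_antitoneOn (h : (1 - α) * (β - 1) ≤ 0) :
    AntitoneOn (rigfOfIntegral α β) (Ioi 0) := by
  intro x hx y _ hxy
  rcases lt_trichotomy α 1 with hα | rfl | hα
  · have hβ : β - 1 ≤ 0 := nonpos_of_mul_nonpos_right h (by linarith)
    exact mul_le_mul_of_nonneg_left (Real.rpow_le_rpow_of_nonpos hx hxy hβ)
      (one_div_nonneg.mpr (by linarith))
  · simp [rigfOfIntegral]
  · have hβ : 0 ≤ β - 1 := nonneg_of_mul_nonpos_right h (by linarith)
    exact mul_le_mul_of_nonpos_left (Real.rpow_le_rpow (le_of_lt hx) hxy hβ)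
      (one_div_nonpos.mpr (by linarith))

end rigfOfIntegral

theorem rigf_coherent_vs_component_general (f Finv q q' : ℝ → ℝ) (α β : ℝ)
    (hα1 : α ≠ 1)
    (hf_nonneg : ∀ x, 0 ≤ f x)
    (hq_mono : MonotoneOn q (Icc (0:ℝ) 1))
    (hq_deriv : ∀ u ∈ Ioo (0:ℝ) 1, HasDerivAt q (q' u) u)
    (hintT : IntegrableOn (fun u => (q' u) ^ α * f (Finv u) ^ (α-1)) (Ioo (0:ℝ) 1))
    (hintX : IntegrableOn (fun u => f (Finv u) ^ (α-1)) (Ioo (0:ℝ) 1))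
    (hposX : 0 < ∫ u in Ioo (0:ℝ) 1, f (Finv u) ^ (α-1))
    (hψφ : ∀ u ∈ Ioo (0:ℝ) 1, (f (Finv u)) ^ α ≤ (q' u * f (Finv u)) ^ α) :
    (((1 < α ∧ β ≤ 1) ∨ (α < 1 ∧ 1 ≤ β)) →
      (1/(1-α)) * (∫ u in Ioo (0:ℝ) 1, f (Finv u) ^ (α-1)) ^ (β-1)
        ≤ (1/(1-α)) * (∫ u in Ioo (0:ℝ) 1, (q' u) ^ α * f (Finv u) ^ (α-1)) ^ (β-1))
    ∧ (((1 < α ∧ 1 ≤ β) ∨ (α < 1 ∧ β ≤ 1)) →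
      (1/(1-α)) * (∫ u in Ioo (0:ℝ) 1, (q' u) ^ α * f (Finv u) ^ (α-1)) ^ (β-1)
        ≤ (1/(1-α)) * (∫ u in Ioo (0:ℝ) 1, f (Finv u) ^ (α-1)) ^ (β-1)) := by
  have hq'_nonneg : ∀ u ∈ Ioo (0:ℝ) 1, 0 ≤ q' u := fun u hu =>
    (hq_deriv u hu).nonneg_of_monotoneOn_of_mem_nhds (Icc_mem_nhds hu.1 hu.2) hq_mono
  have hXT : (∫ u in Ioo (0:ℝ) 1, f (Finv u) ^ (α-1))
      ≤ ∫ u in Ioo (0:ℝ) 1, (q' u) ^ α * f (Finv u) ^ (α-1) :=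
    setIntegral_mono_on hintX hintT measurableSet_Ioo fun u hu =>
      Real.rpow_sub_one_le_rpow_mul_rpow_sub_one (hf_nonneg _) (hq'_nonneg u hu) hα1 (hψφ u hu)
  have hposT := hposX.trans_le hXT
  refine ⟨fun h => rigfOfIntegral_monotoneOn ?_ hposX hposT hXT,
    fun h => rigfOfIntegral_antitoneOn ?_ hposX hposT hXT⟩
  all_goals rcases h with ⟨h₁, h₂⟩ | ⟨h₁, h₂⟩ <;> nlinarith

/-- for a coherent system with lifetime `T`, distortion function `q` and
component lifetime `X`, if `ψ_α(q(u)) = (q'(u) f(F⁻¹(u)))^α ≥ φ_α(u) = f(F⁻¹(u))^α` for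
all `u ∈ (0,1)`, then `R^α_β(T) ≥ R^α_β(X)` when `{α > 1, 0 < β ≤ 1}` or
`{0 < α < 1, β ≥ 1}`, and `R^α_β(T) ≤ R^α_β(X)` when `{α > 1, β ≥ 1}` or
`{0 < α < 1, 0 < β ≤ 1}`. -/
theorem rigf_coherent_vs_component (f F Finv q q' : ℝ → ℝ) (α β : ℝ)
    (hα : 0 < α) (hα1 : α ≠ 1) (hβ : 0 < β)
    (hf_nonneg : ∀ x, 0 ≤ f x)
    (hf_pdf : ∫ x in Ioi (0:ℝ), f x = 1)
    (hF_cont : Continuous F) (hF_mono : StrictMono F)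
    (hFinv : ∀ u ∈ Ioo (0:ℝ) 1, F (Finv u) = u)
    (hq_mono : MonotoneOn q (Icc (0:ℝ) 1)) (hq0 : q 0 = 0) (hq1 : q 1 = 1)
    (hq_maps : ∀ u ∈ Icc (0:ℝ) 1, q u ∈ Icc (0:ℝ) 1)
    (hq_deriv : ∀ u ∈ Ioo (0:ℝ) 1, HasDerivAt q (q' u) u)
    (hq'_cont : ContinuousOn q' (Ioo (0:ℝ) 1))
    (hintT : IntegrableOn (fun u => (q' u) ^ α * f (Finv u) ^ (α-1)) (Ioo (0:ℝ) 1))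
    (hposT : 0 < ∫ u in Ioo (0:ℝ) 1, (q' u) ^ α * f (Finv u) ^ (α-1))
    (hintX : IntegrableOn (fun u => f (Finv u) ^ (α-1)) (Ioo (0:ℝ) 1))
    (hposX : 0 < ∫ u in Ioo (0:ℝ) 1, f (Finv u) ^ (α-1))
    (hψφ : ∀ u ∈ Ioo (0:ℝ) 1, (f (Finv u)) ^ α ≤ (q' u * f (Finv u)) ^ α) :
    (((1 < α ∧ β ≤ 1) ∨ (α < 1 ∧ 1 ≤ β)) →
      (1/(1-α)) * (∫ u in Ioo (0:ℝ) 1, f (Finv u) ^ (α-1)) ^ (β-1)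
        ≤ (1/(1-α)) * (∫ u in Ioo (0:ℝ) 1, (q' u) ^ α * f (Finv u) ^ (α-1)) ^ (β-1))
    ∧ (((1 < α ∧ 1 ≤ β) ∨ (α < 1 ∧ β ≤ 1)) →
      (1/(1-α)) * (∫ u in Ioo (0:ℝ) 1, (q' u) ^ α * f (Finv u) ^ (α-1)) ^ (β-1)
        ≤ (1/(1-α)) * (∫ u in Ioo (0:ℝ) 1, f (Finv u) ^ (α-1)) ^ (β-1)) :=
  rigf_coherent_vs_component_general f Finv q q' α β hα1 hf_nonneg hq_mono hq_deriv hintT hintX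
    hposX hψφ
end

section
/- Let T be the lifetime of a coherent system with identically distributed components having continuous, strictly increasing CDF F and density f, and distortion function q : [0,1] → [0,1] (increasing, continuously differentiable, q(0)=0, q(1)=1), so that R^α_β(T) = (1/(1−α))·(∫_0^1 q′(u)^α f(F⁻¹(u))^{α−1} du)^{β−1} and R^α_β(X) = (1/(1−α))·(∫_0^1 f(F⁻¹(u))^{α−1} du)^{β−1}. Write ψ_α(q(u))/φ_α(u) = q′(u)^α for the ratio of ψ_α(q(u)) = (q′(u) f(F⁻¹(u)))^α to φ_α(u) = f(F⁻¹(u))^α, and set ξ_{1,α} = (inf_{u∈(0,1)} ψ_α(q(u))/φ_α(u))^{β−1} and ξ_{2,α} = (sup_{u∈(0,1)} ψ_α(q(u))/φ_α(u))^{β−1}, assumed finite and positive, and assume the defining integrals are finite and positive. Then: (i) ξ_{1,α}·R^α_β(X) ≤ R^α_β(T) ≤ ξ_{2,α}·R^α_β(X) when {α > 1, 0 < β ≤ 1} or {0 < α < 1, β ≥ 1}; (ii) ξ_{1,α}·R^α_β(X) ≥ R^α_β(T) ≥ ξ_{2,α}·R^α_β(X) when {α > 1, β ≥ 1} or {0 <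 α < 1, 0 < β ≤ 1}. -/
open MeasureTheory Set

/-!
Since `ψ_α(q(u))/φ_α(u) = q'(u)^α` lies between its infimum `m` and supremum `M`, integrating
against the nonnegative weight `f(F⁻¹(u))^(α-1)` sandwiches the integral defining `R^α_β(T)`
between `m` and `M` times the one defining `R^α_β(X)`. The map `t ↦ t^(β-1)/(1-α)` on `(0, ∞)` is
monotone exactly when `1 - α` and `β - 1` have the same sign and antitone when they have opposite
signs, which gives the two chains after pulling `m^(β-1)` and `M^(β-1)` out of the powers.
-/

section WeightedIntegral

variable {X : Type*} [MeasurableSpace X] {μ : Measure X} {s : Set X} {w g : X → ℝ} {c : ℝ}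

theorem const_mul_setIntegral_le_setIntegral_mul (hs : MeasurableSet s)
    (hg : IntegrableOn g s μ) (hwg : IntegrableOn (fun x => w x * g x) s μ)
    (hg_nonneg : ∀ x ∈ s, 0 ≤ g x) (hcw : ∀ x ∈ s, c ≤ w x) :
    c * ∫ x in s, g x ∂μ ≤ ∫ x in s, w x * g x ∂μ := by
  rw [← integral_const_mul]
  exact setIntegral_mono_on (hg.const_mul c) hwg hs fun x hx =>
    mul_le_mul_of_nonneg_right (hcw x hx) (hg_nonneg x hx)

theorem setIntegral_mul_le_const_mul_setIntegral (hs : MeasurableSet s)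
    (hg : IntegrableOn g s μ) (hwg : IntegrableOn (fun x => w x * g x) s μ)
    (hg_nonneg : ∀ x ∈ s, 0 ≤ g x) (hwc : ∀ x ∈ s, w x ≤ c) :
    ∫ x in s, w x * g x ∂μ ≤ c * ∫ x in s, g x ∂μ := by
  rw [← integral_const_mul]
  exact setIntegral_mono_on hwg (hg.const_mul c) hs fun x hx =>
    mul_le_mul_of_nonneg_right (hwc x hx) (hg_nonneg x hx)

end WeightedIntegral

section RpowScale

variable {α β x y : ℝ}

theorem one_div_one_sub_mul_rpow_le_of_sign_eq (hαβ : (1 < α ∧ β ≤ 1) ∨ (α < 1 ∧ 1 ≤ β))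
    (hx : 0 < x) (hxy : x ≤ y) :
    1 / (1 - α) * x ^ (β - 1) ≤ 1 / (1 - α) * y ^ (β - 1) := by
  rcases hαβ with ⟨hα, hβ⟩ | ⟨hα, hβ⟩
  · exact mul_le_mul_of_nonpos_left (Real.rpow_le_rpow_of_nonpos hx hxy (by linarith))
      (one_div_nonpos.mpr (by linarith))
  · exact mul_le_mul_of_nonneg_left (Real.rpow_le_rpow hx.le hxy (by linarith))
      (one_div_nonneg.mpr (by linarith))

theorem one_div_one_sub_mul_rpow_le_of_sign_ne (hαβ : (1 < α ∧ 1 ≤ β) ∨ (α < 1 ∧ β ≤ 1))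
    (hx : 0 < x) (hxy : x ≤ y) :
    1 / (1 - α) * y ^ (β - 1) ≤ 1 / (1 - α) * x ^ (β - 1) := by
  rcases hαβ with ⟨hα, hβ⟩ | ⟨hα, hβ⟩
  · exact mul_le_mul_of_nonpos_left (Real.rpow_le_rpow hx.le hxy (by linarith))
      (one_div_nonpos.mpr (by linarith))
  · exact mul_le_mul_of_nonneg_left (Real.rpow_le_rpow_of_nonpos hx hxy (by linarith))
      (one_div_nonneg.mpr (by linarith))

theorem rpow_mul_one_div_one_sub_mul_rpow (hx : 0 ≤ x) (hy : 0 ≤ y) :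
    x ^ (β - 1) * (1 / (1 - α) * y ^ (β - 1)) = 1 / (1 - α) * (x * y) ^ (β - 1) := by
  rw [Real.mul_rpow hx hy]
  ring

end RpowScale

theorem rigf_coherent_bounds_general (f Finv q' : ℝ → ℝ) (α β : ℝ)
    (hf_nonneg : ∀ x, 0 ≤ f x)
    (hintT : IntegrableOn (fun u => (q' u) ^ α * f (Finv u) ^ (α-1)) (Ioo (0:ℝ) 1))
    (hposT : 0 < ∫ u in Ioo (0:ℝ) 1, (q' u) ^ α * f (Finv u) ^ (α-1))
    (hintX : IntegrableOn (fun u => f (Finv u) ^ (α-1)) (Ioo (0:ℝ) 1))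
    (hposX : 0 < ∫ u in Ioo (0:ℝ) 1, f (Finv u) ^ (α-1))
    (hbdd : BddAbove ((fun u => (q' u) ^ α) '' Ioo (0:ℝ) 1))
    (hinf_pos : 0 < sInf ((fun u => (q' u) ^ α) '' Ioo (0:ℝ) 1)) :
    (((1 < α ∧ β ≤ 1) ∨ (α < 1 ∧ 1 ≤ β)) →
      (sInf ((fun u => (q' u) ^ α) '' Ioo (0:ℝ) 1)) ^ (β-1) *
          ((1/(1-α)) * (∫ u in Ioo (0:ℝ) 1, f (Finv u) ^ (α-1)) ^ (β-1))
        ≤ (1/(1-α)) * (∫ u in Ioo (0:ℝ) 1, (q' u) ^ α * f (Finv u) ^ (α-1)) ^ (β-1)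
      ∧ (1/(1-α)) * (∫ u in Ioo (0:ℝ) 1, (q' u) ^ α * f (Finv u) ^ (α-1)) ^ (β-1)
        ≤ (sSup ((fun u => (q' u) ^ α) '' Ioo (0:ℝ) 1)) ^ (β-1) *
            ((1/(1-α)) * (∫ u in Ioo (0:ℝ) 1, f (Finv u) ^ (α-1)) ^ (β-1)))
    ∧ (((1 < α ∧ 1 ≤ β) ∨ (α < 1 ∧ β ≤ 1)) →
      (1/(1-α)) * (∫ u in Ioo (0:ℝ) 1, (q' u) ^ α * f (Finv u) ^ (α-1)) ^ (β-1)
        ≤ (sInf ((fun u => (q' u) ^ α) '' Ioo (0:ℝ) 1)) ^ (β-1) *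
            ((1/(1-α)) * (∫ u in Ioo (0:ℝ) 1, f (Finv u) ^ (α-1)) ^ (β-1))
      ∧ (sSup ((fun u => (q' u) ^ α) '' Ioo (0:ℝ) 1)) ^ (β-1) *
            ((1/(1-α)) * (∫ u in Ioo (0:ℝ) 1, f (Finv u) ^ (α-1)) ^ (β-1))
        ≤ (1/(1-α)) * (∫ u in Ioo (0:ℝ) 1, (q' u) ^ α * f (Finv u) ^ (α-1)) ^ (β-1)) := by
  set S := (fun u => (q' u) ^ α) '' Ioo (0:ℝ) 1
  -- `Real.sInf` of a set that is not bounded below is `0`.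
  have hbdd_below : BddBelow S := by
    by_contra h
    exact hinf_pos.ne' (by rw [csInf_of_not_bddBelow h, Real.sInf_empty])
  have hM : 0 < sSup S :=
    hinf_pos.trans_le (csInf_le_csSup ⟨_, ⟨1 / 2, by norm_num, rfl⟩⟩ hbdd_below hbdd)
  have hweight : ∀ u ∈ Ioo (0:ℝ) 1, 0 ≤ f (Finv u) ^ (α - 1) := fun u _ =>
    Real.rpow_nonneg (hf_nonneg _) _
  have hlow := const_mul_setIntegral_le_setIntegral_mul measurableSet_Ioo hintX hintT hweight
    fun u hu => csInf_le hbdd_below ⟨u, hu, rfl⟩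
  have hhigh := setIntegral_mul_le_const_mul_setIntegral measurableSet_Ioo hintX hintT hweight
    fun u hu => le_csSup hbdd ⟨u, hu, rfl⟩
  rw [rpow_mul_one_div_one_sub_mul_rpow hinf_pos.le hposX.le,
    rpow_mul_one_div_one_sub_mul_rpow hM.le hposX.le]
  have hmB := mul_pos hinf_pos hposX
  exact ⟨fun h => ⟨one_div_one_sub_mul_rpow_le_of_sign_eq h hmB hlow,
      one_div_one_sub_mul_rpow_le_of_sign_eq h hposT hhigh⟩,
    fun h => ⟨one_div_one_sub_mul_rpow_le_of_sign_ne h hmB hlow,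
      one_div_one_sub_mul_rpow_le_of_sign_ne h hposT hhigh⟩⟩

/-- bounds on the RIGF of a coherent system in terms of the RIGF of a
component, via `ξ_{1,α} = (inf_{u∈(0,1)} q'(u)^α)^(β-1)` and
`ξ_{2,α} = (sup_{u∈(0,1)} q'(u)^α)^(β-1)` (the ratio `ψ_α(q(u))/φ_α(u) = q'(u)^α`):
`ξ_{1,α} R^α_β(X) ≤ R^α_β(T) ≤ ξ_{2,α} R^α_β(X)` when `{α > 1, 0 < β ≤ 1}` or
`{0 < α < 1, β ≥ 1}`, with the reversed chain when `{α > 1, β ≥ 1}` or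
`{0 < α < 1, 0 < β ≤ 1}`. -/
theorem rigf_coherent_bounds (f F Finv q q' : ℝ → ℝ) (α β : ℝ)
    (hα : 0 < α) (hα1 : α ≠ 1) (hβ : 0 < β)
    (hf_nonneg : ∀ x, 0 ≤ f x)
    (hf_pdf : ∫ x in Ioi (0:ℝ), f x = 1)
    (hF_cont : Continuous F) (hF_mono : StrictMono F)
    (hFinv : ∀ u ∈ Ioo (0:ℝ) 1, F (Finv u) = u)
    (hq_mono : MonotoneOn q (Icc (0:ℝ) 1)) (hq0 : q 0 = 0) (hq1 : q 1 = 1)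
    (hq_maps : ∀ u ∈ Icc (0:ℝ) 1, q u ∈ Icc (0:ℝ) 1)
    (hq_deriv : ∀ u ∈ Ioo (0:ℝ) 1, HasDerivAt q (q' u) u)
    (hq'_cont : ContinuousOn q' (Ioo (0:ℝ) 1))
    (hintT : IntegrableOn (fun u => (q' u) ^ α * f (Finv u) ^ (α-1)) (Ioo (0:ℝ) 1))
    (hposT : 0 < ∫ u in Ioo (0:ℝ) 1, (q' u) ^ α * f (Finv u) ^ (α-1))
    (hintX : IntegrableOn (fun u => f (Finv u) ^ (α-1)) (Ioo (0:ℝ) 1))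
    (hposX : 0 < ∫ u in Ioo (0:ℝ) 1, f (Finv u) ^ (α-1))
    (hbdd : BddAbove ((fun u => (q' u) ^ α) '' Ioo (0:ℝ) 1))
    (hinf_pos : 0 < sInf ((fun u => (q' u) ^ α) '' Ioo (0:ℝ) 1)) :
    (((1 < α ∧ β ≤ 1) ∨ (α < 1 ∧ 1 ≤ β)) →
      (sInf ((fun u => (q' u) ^ α) '' Ioo (0:ℝ) 1)) ^ (β-1) *
          ((1/(1-α)) * (∫ u in Ioo (0:ℝ) 1, f (Finv u) ^ (α-1)) ^ (β-1))
        ≤ (1/(1-α)) * (∫ u in Ioo (0:ℝ) 1, (q' u) ^ α * f (Finv u) ^ (α-1)) ^ (β-1)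
      ∧ (1/(1-α)) * (∫ u in Ioo (0:ℝ) 1, (q' u) ^ α * f (Finv u) ^ (α-1)) ^ (β-1)
        ≤ (sSup ((fun u => (q' u) ^ α) '' Ioo (0:ℝ) 1)) ^ (β-1) *
            ((1/(1-α)) * (∫ u in Ioo (0:ℝ) 1, f (Finv u) ^ (α-1)) ^ (β-1)))
    ∧ (((1 < α ∧ 1 ≤ β) ∨ (α < 1 ∧ β ≤ 1)) →
      (1/(1-α)) * (∫ u in Ioo (0:ℝ) 1, (q' u) ^ α * f (Finv u) ^ (α-1)) ^ (β-1)
        ≤ (sInf ((fun u => (q' u) ^ α) '' Ioo (0:ℝ) 1)) ^ (β-1) *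
            ((1/(1-α)) * (∫ u in Ioo (0:ℝ) 1, f (Finv u) ^ (α-1)) ^ (β-1))
      ∧ (sSup ((fun u => (q' u) ^ α) '' Ioo (0:ℝ) 1)) ^ (β-1) *
            ((1/(1-α)) * (∫ u in Ioo (0:ℝ) 1, f (Finv u) ^ (α-1)) ^ (β-1))
        ≤ (1/(1-α)) * (∫ u in Ioo (0:ℝ) 1, (q' u) ^ α * f (Finv u) ^ (α-1)) ^ (β-1)) :=
  rigf_coherent_bounds_general f Finv q' α β hf_nonneg hintT hposT hintX hposX hbdd hinf_pos
end
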